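/- arXiv:0802.1052 — 6 statements merged into one kernel-verified Lean document; each statement's English description precedes it below -/
import Mathlib

section
/- (Lemma 1, digit-extraction form.) Let ν be a nonnegative integer, let k be a positive integer, and let t₀, t₁, …, t_{2ν} be integers satisfying 2·|t_ι| < k for every ι with 0 ≤ ι ≤ 2ν. Then t_ν = 0 if and only if there exists an integer z such that −k^ν < 2·( (Σ_{ι=0}^{2ν} t_ι·k^ι) − z·k^{ν+1} ) < k^ν. -/
/-- Lemma 1 (digit-extraction form): if `2|t_ι| < k` for all `ι ≤ 2ν`, then
`t_ν = 0` iff there is an integer `z` with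
`-k^ν < 2(Σ_{ι=0}^{2ν} t_ι k^ι - z k^{ν+1}) < k^ν`. -/
theorem digit_extraction (ν k : ℕ) (hk : 0 < k) (t : ℕ → ℤ)
    (ht : ∀ ι ≤ 2 * ν, 2 * |t ι| < (k : ℤ)) :
    t ν = 0 ↔ ∃ z : ℤ,
      -((k : ℤ) ^ ν) < 2 * ((∑ ι ∈ Finset.range (2 * ν + 1), t ι * (k : ℤ) ^ ι) - z * (k : ℤ) ^ (ν + 1)) ∧
      2 * ((∑ ι ∈ Finset.range (2 * ν + 1), t ι * (k : ℤ) ^ ι) - z * (k : ℤ) ^ (ν + 1)) < (k : ℤ) ^ ν := by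
  have hk' : (0:ℤ) < (k:ℤ) := by exact_mod_cast hk
  set L : ℤ := ∑ ι ∈ Finset.range ν, t ι * (k:ℤ) ^ ι with hLdef
  set H : ℤ := ∑ ι ∈ Finset.range ν, t (ν + 1 + ι) * (k:ℤ) ^ ι with hHdef
  -- bound on the low part
  have hL : 2 * |L| ≤ (k:ℤ) ^ ν - 1 := by
    have key : ∀ n : ℕ, (∀ ι < n, 2 * |t ι| < (k:ℤ)) →
        2 * |∑ ι ∈ Finset.range n, t ι * (k:ℤ) ^ ι| ≤ (k:ℤ) ^ n - 1 := by
      intro n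
      induction n with
      | zero => simp
      | succ n ih =>
        intro h
        have h1 := ih (fun ι hι => h ι (Nat.lt_succ_of_lt hι))
        have h2 := h n (Nat.lt_succ_self n)
        have hpow : (0:ℤ) < (k:ℤ) ^ n := pow_pos hk' n
        rw [Finset.sum_range_succ]
        have habs := abs_add_le (∑ ι ∈ Finset.range n, t ι * (k:ℤ) ^ ι) (t n * (k:ℤ) ^ n)
        have habs2 : |t n * (k:ℤ) ^ n| = |t n| * (k:ℤ) ^ n := by
          rw [abs_mul, abs_pow, abs_of_nonneg (le_of_lt hk')]
        rw [pow_succ]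
        nlinarith [abs_nonneg (t n)]
    exact key ν (fun ι hι => ht ι (by omega))
  have hpowν : (0:ℤ) < (k:ℤ) ^ ν := pow_pos hk' ν
  -- split the sum
  have hsplit : (∑ ι ∈ Finset.range (2 * ν + 1), t ι * (k:ℤ) ^ ι)
      = L + t ν * (k:ℤ) ^ ν + H * (k:ℤ) ^ (ν + 1) := by
    have h1 : 2 * ν + 1 = (ν + 1) + ν := by omega
    rw [h1, Finset.sum_range_add, Finset.sum_range_succ]
    have h2 : ∑ ι ∈ Finset.range ν, t (ν + 1 + ι) * (k:ℤ) ^ (ν + 1 + ι)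
        = H * (k:ℤ) ^ (ν + 1) := by
      rw [hHdef, Finset.sum_mul]
      refine Finset.sum_congr rfl fun i _ => ?_
      rw [pow_add]
      ring
    rw [h2]
  constructor
  · intro h0
    have habs : |2 * L| < (k:ℤ) ^ ν := by rw [abs_mul, abs_two]; linarith
    obtain ⟨ha, hb⟩ := abs_lt.mp habs
    exact ⟨H, by rw [hsplit, h0]; linarith, by rw [hsplit, h0]; linarith⟩
  · rintro ⟨z, h1, h2⟩
    rw [hsplit] at h1 h2
    set m : ℤ := t ν + (H - z) * (k:ℤ) with hmdef
    have hD : L + t ν * (k:ℤ) ^ ν + H * (k:ℤ) ^ (ν + 1) - z * (k:ℤ) ^ (ν + 1)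
        = L + m * (k:ℤ) ^ ν := by
      rw [hmdef, pow_succ]
      ring
    rw [hD] at h1 h2
    have hm : m = 0 := by
      rcases eq_or_ne m 0 with h | h
      · exact h
      · exfalso
        rcases h.lt_or_gt with hlt | hlt
        · have hle : m ≤ -1 := by omega
          nlinarith [neg_abs_le L, le_abs_self L,
            mul_le_mul_of_nonneg_right hle hpowν.le]
        · have hle : (1:ℤ) ≤ m := by omega
          nlinarith [neg_abs_le L, le_abs_self L,
            mul_le_mul_of_nonneg_right hle hpowν.le]
    rw [hmdef] at hm
    have hz : z - H = 0 := by
      rcases eq_or_ne (z - H) 0 with h | h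
      · exact h
      · exfalso
        have h1a : 1 ≤ |z - H| := Int.one_le_abs h
        have hb := ht ν (by omega)
        have htν : t ν = (z - H) * (k:ℤ) := by linarith
        rw [htν, abs_mul, abs_of_nonneg hk'.le] at hb
        nlinarith
    have htν : t ν = (z - H) * (k:ℤ) := by linarith
    rw [htν, hz, zero_mul]
end

section
/- (Lemma 2, coding equivalence.) Let λ ≥ 1 and δ ≥ 1 be integers, let b and c be nonnegative integers, and let k be a positive integer with k > c. Then the following two statements are equivalent: (i) there exist nonnegative integers h₁,…,h_δ with h_ι ≤ c for all ι and b = Σ_{ι=1}^{δ} h_ι·k^{(λ+1)^ι}; (ii) the conjunction of: (a) there exists a nonnegative integer d with b = d·k^{λ+1}; (b) for every ι with 1 ≤ ι ≤ δ−1 there exist nonnegative integers d and e with b = d·k^{(λ+1)^{ι+1}} + e and e < (c+1)·k^{(λ+1)^ι}; and (c) b < (c+1)·k^{(λ+1)^δ}. -/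
/-!
Put `D ι = k ^ (λ+1)^ι`. Since `λ ≥ 1` the exponents increase strictly, so `D ι ∣ D (ι+1)` and
`(c+1) D ι ≤ D (ι+1)`: the `D ι` form a mixed-radix system in which `b = Σ h_ι D ι` with digits
`h_ι ≤ c`. For such a sum the partial sum `Σ_{j ≤ ι} h_j D j` is `< (c+1) D ι`, hence it is the
remainder of `b` modulo `D (ι+1)`; this gives (i) ⇒ (ii). Conversely the conditions (ii) say that
every remainder `b mod D (ι+1)` is `< (c+1) D ι`, so the digits `(b mod D (ι+1)) / D ι` read off
from `b` are at most `c`, and they reassemble `b` by telescoping.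
-/

open Finset

namespace Nat

theorem mod_eq_mod_add_sum_div_mul {D : ℕ → ℕ} (hD : ∀ j, D j ∣ D (j + 1)) (b m : ℕ) :
    b % D m = b % D 0 + ∑ j ∈ range m, b % D (j + 1) / D j * D j := by
  induction m with
  | zero => simp
  | succ m ih =>
    rw [sum_range_succ, ← add_assoc, ← ih, ← Nat.mod_mod_of_dvd b (hD m), Nat.mod_add_div']

theorem exists_eq_mul_add_lt_iff {b K B : ℕ} (hBK : B ≤ K) :
    (∃ d e : ℕ, b = d * K + e ∧ e < B) ↔ b % K < B := by
  constructor
  · rintro ⟨d, e, rfl, he⟩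
    rwa [add_comm, Nat.add_mul_mod_self_right, Nat.mod_eq_of_lt (he.trans_le hBK)]
  · exact fun h => ⟨b / K, b % K, (Nat.div_add_mod' b K).symm, h⟩

theorem succ_mul_pow_le_pow {c k m n : ℕ} (hck : c < k) (hmn : m < n) :
    (c + 1) * k ^ m ≤ k ^ n :=
  calc (c + 1) * k ^ m ≤ k ^ (m + 1) := by rw [pow_succ']; gcongr; omega
    _ ≤ k ^ n := Nat.pow_le_pow_right (by omega) hmn

end Nat

section MixedRadix

variable {c : ℕ} {D : ℕ → ℕ}

theorem sum_digits_lt (hD0 : 0 < D 0) (hD : ∀ j, (c + 1) * D j ≤ D (j + 1)) {H : ℕ → ℕ}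
    {m : ℕ} (hH : ∀ j < m, H j ≤ c) : ∑ j ∈ range m, H j * D (j + 1) < (c + 1) * D m := by
  induction m with
  | zero => simpa using hD0
  | succ m ih =>
    have hm : H m * D (m + 1) ≤ c * D (m + 1) := Nat.mul_le_mul_right _ (hH m (by omega))
    rw [sum_range_succ]
    linarith [hD m, ih fun j hj => hH j (by omega)]

theorem sum_digits_mod (hdvd : ∀ ⦃i j⦄, i ≤ j → D i ∣ D j) (hD0 : 0 < D 0)
    (hD : ∀ j, (c + 1) * D j ≤ D (j + 1)) {H : ℕ → ℕ} {ι m : ℕ} (hH : ∀ j < ι, H j ≤ c)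
    (hιm : ι ≤ m) :
    (∑ j ∈ range m, H j * D (j + 1)) % D (ι + 1) = ∑ j ∈ range ι, H j * D (j + 1) := by
  have htail : D (ι + 1) ∣ ∑ j ∈ Ico ι m, H j * D (j + 1) :=
    dvd_sum fun j hj => (hdvd (by simp at hj; omega)).mul_left _
  obtain ⟨q, hq⟩ := htail
  rw [← sum_range_add_sum_Ico _ hιm, hq, Nat.add_mul_mod_self_left]
  exact Nat.mod_eq_of_lt ((sum_digits_lt hD0 hD hH).trans_le (hD ι))

theorem exists_digits_iff (hdvd : ∀ ⦃i j⦄, i ≤ j → D i ∣ D j) (hD0 : 0 < D 0)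
    (hD : ∀ j, (c + 1) * D j ≤ D (j + 1)) (b δ : ℕ) :
    (∃ H : ℕ → ℕ, (∀ j < δ, H j ≤ c) ∧ b = ∑ j ∈ range δ, H j * D (j + 1)) ↔
      b % D 1 = 0 ∧ (∀ ι, 1 ≤ ι → ι ≤ δ - 1 → b % D (ι + 1) < (c + 1) * D ι) ∧
        b < (c + 1) * D δ := by
  constructor
  · rintro ⟨H, hH, rfl⟩
    refine ⟨?_, fun ι _ hι => ?_, sum_digits_lt hD0 hD hH⟩
    · simpa using sum_digits_mod hdvd hD0 hD (ι := 0) (by simp) (Nat.zero_le δ)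
    · rw [sum_digits_mod hdvd hD0 hD (fun j hj => hH j (by omega)) (by omega)]
      exact sum_digits_lt hD0 hD fun j hj => hH j (by omega)
  · rintro ⟨h1, hmid, hlast⟩
    have hpos : ∀ j, 0 < D j := Nat.rec hD0 fun j hj => by nlinarith [hD j]
    have hb : b % D (δ + 1) = b := Nat.mod_eq_of_lt (hlast.trans_le (hD δ))
    refine ⟨fun j => b % D (j + 2) / D (j + 1), fun j hj => ?_, ?_⟩
    · have hrem : b % D (j + 2) < (c + 1) * D (j + 1) := by
        rcases Nat.lt_or_ge (j + 1) δ with hlt | hge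
        · exact hmid (j + 1) (by omega) (by omega)
        · obtain rfl : δ = j + 1 := by omega
          rwa [hb]
      rwa [← Nat.lt_add_one_iff, Nat.div_lt_iff_lt_mul (hpos _)]
    · simpa only [hb, h1, zero_add] using Nat.mod_eq_mod_add_sum_div_mul
        (D := fun j => D (j + 1)) (fun j => hdvd (Nat.le_succ _)) b δ

end MixedRadix

theorem exists_fin_le_sum_iff (c b δ : ℕ) (w : ℕ → ℕ) :
    (∃ h : Fin δ → ℕ, (∀ ι, h ι ≤ c) ∧ b = ∑ ι : Fin δ, h ι * w ι) ↔
      ∃ H : ℕ → ℕ, (∀ j < δ, H j ≤ c) ∧ b = ∑ j ∈ range δ, H j * w j := by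
  constructor
  · rintro ⟨h, hh, rfl⟩
    refine ⟨fun j => if hj : j < δ then h ⟨j, hj⟩ else 0, fun j hj => by simpa [hj] using hh _, ?_⟩
    rw [← Fin.sum_univ_eq_sum_range]
    simp
  · rintro ⟨H, hH, rfl⟩
    exact ⟨fun ι => H ι, fun ι => hH ι ι.isLt, (Fin.sum_univ_eq_sum_range _ _).symm⟩

theorem coding_equivalence_general (lam δ : ℕ) (hlam : 1 ≤ lam)
    (b c k : ℕ) (hkc : c < k) :
    (∃ h : Fin δ → ℕ, (∀ ι : Fin δ, h ι ≤ c) ∧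
        b = ∑ ι : Fin δ, h ι * k ^ ((lam + 1) ^ (ι.val + 1))) ↔
      ((∃ d : ℕ, b = d * k ^ (lam + 1)) ∧
        (∀ ι : ℕ, 1 ≤ ι → ι ≤ δ - 1 → ∃ d e : ℕ,
          b = d * k ^ ((lam + 1) ^ (ι + 1)) + e ∧ e < (c + 1) * k ^ ((lam + 1) ^ ι)) ∧
        b < (c + 1) * k ^ ((lam + 1) ^ δ)) := by
  have hexp : StrictMono fun ι : ℕ => (lam + 1) ^ ι := pow_right_strictMono₀ (by omega)
  have hdvd : ∀ ⦃i j⦄, i ≤ j → k ^ ((lam + 1) ^ i) ∣ k ^ ((lam + 1) ^ j) :=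
    fun i j hij => pow_dvd_pow k (hexp.monotone hij)
  have hradix : ∀ j, (c + 1) * k ^ ((lam + 1) ^ j) ≤ k ^ ((lam + 1) ^ (j + 1)) :=
    fun j => Nat.succ_mul_pow_le_pow hkc (hexp j.lt_succ_self)
  rw [exists_fin_le_sum_iff c b δ fun j => k ^ ((lam + 1) ^ (j + 1)),
    exists_digits_iff hdvd (pow_pos (by omega) _) hradix, ← dvd_iff_exists_eq_mul_left,
    Nat.dvd_iff_mod_eq_zero, pow_one]
  simp only [Nat.exists_eq_mul_add_lt_iff (hradix _)]

/-- Lemma 2 (coding equivalence): for `k > c`, the number `b` codes a tuple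
`h₁,…,h_δ` of numbers `≤ c` via `b = Σ_{ι=1}^{δ} h_ι k^{(λ+1)^ι}` iff the
conditions (a), (b), (c) of Lemma 2 hold. -/
theorem coding_equivalence (lam δ : ℕ) (hlam : 1 ≤ lam) (hδ : 1 ≤ δ)
    (b c k : ℕ) (hk : 0 < k) (hkc : c < k) :
    (∃ h : Fin δ → ℕ, (∀ ι : Fin δ, h ι ≤ c) ∧
        b = ∑ ι : Fin δ, h ι * k ^ ((lam + 1) ^ (ι.val + 1))) ↔
      ((∃ d : ℕ, b = d * k ^ (lam + 1)) ∧
        (∀ ι : ℕ, 1 ≤ ι → ι ≤ δ - 1 → ∃ d e : ℕ,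
          b = d * k ^ ((lam + 1) ^ (ι + 1)) + e ∧ e < (c + 1) * k ^ ((lam + 1) ^ ι)) ∧
        b < (c + 1) * k ^ ((lam + 1) ^ δ)) :=
  coding_equivalence_general lam δ hlam b c k hkc
end

section
/- (Lemma 3.) Let g be a positive integer and let s and t be integers. Then there exists an integer z with s < z·g < t if and only if for every integer y with −s² − t² − 2 < y ≤ s² + t² + 2, at least one of the inequalities (y−1)·g − s > 0 and t − y·g > 0 holds. -/
/-- Lemma 3: for `g > 0`, `∃ z [s < z·g < t]` iff for every `y` in the range
`-s² - t² - 2 < y ≤ s² + t² + 2` one of `(y-1)·g - s > 0`, `t - y·g > 0` holds. -/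
theorem lemma3 (g s t : ℤ) (hg : 0 < g) :
    (∃ z : ℤ, s < z * g ∧ z * g < t) ↔
      (∀ y : ℤ, -s ^ 2 - t ^ 2 - 2 < y → y ≤ s ^ 2 + t ^ 2 + 2 →
        0 < (y - 1) * g - s ∨ 0 < t - y * g) := by
  constructor
  · rintro ⟨z, hz1, hz2⟩ y _ _
    rcases le_or_gt y z with h | h
    · right
      have := mul_le_mul_of_nonneg_right h hg.le
      linarith
    · left
      have hzy : z ≤ y - 1 := by omega
      have := mul_le_mul_of_nonneg_right hzy hg.le
      linarith
  · intro h
    set z : ℤ := s / g + 1 with hzdef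
    have hmod1 : 0 ≤ s % g := Int.emod_nonneg s hg.ne'
    have hmod2 : s % g < g := Int.emod_lt_of_pos s hg
    have heq : g * (s / g) + s % g = s := Int.mul_ediv_add_emod s g
    have h1 : s < z * g := by rw [hzdef]; nlinarith
    have h2 : (z - 1) * g ≤ s := by rw [hzdef]; nlinarith
    have hg1 : 1 ≤ g := hg
    have hb1 : -s ^ 2 - t ^ 2 - 2 < z := by
      rcases le_or_gt z 0 with hz | hz
      · nlinarith [mul_nonneg (neg_nonneg.mpr hz) (by linarith : (0:ℤ) ≤ g - 1),
          sq_nonneg (2 * s + 1), sq_nonneg t]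
      · nlinarith [sq_nonneg s, sq_nonneg t]
    have hb2 : z ≤ s ^ 2 + t ^ 2 + 2 := by
      rcases le_or_gt z 0 with hz | hz
      · nlinarith [sq_nonneg s, sq_nonneg t]
      · nlinarith [mul_nonneg (by linarith : (0:ℤ) ≤ z - 1) (by linarith : (0:ℤ) ≤ g - 1),
          sq_nonneg (2 * s - 1), sq_nonneg t]
    rcases h z hb1 hb2 with hc | hc
    · linarith
    · exact ⟨z, h1, by linarith⟩
end

section
/- (Single-inequality form of Lemma 3.) Let g be a positive integer and let s and t be integers with t − s ≤ g. Then there exists an integer z with s < z·g < t if and only if for every integer y with −s² − t² − 2 < y ≤ s² + t² + 2 one has ((y−1)·g − s)·(y·g − t) > 0. -/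
/-- Single-inequality form of Lemma 3: if `g > 0` and `t - s ≤ g`, then
`∃ z [s < z·g < t]` iff `Z(g,s,t,y) > 0` for all `y` in the range
`-s² - t² - 2 < y ≤ s² + t² + 2`. -/
theorem lemma3_single_inequality (g s t : ℤ) (hg : 0 < g) (hts : t - s ≤ g) :
    (∃ z : ℤ, s < z * g ∧ z * g < t) ↔
      (∀ y : ℤ, -s ^ 2 - t ^ 2 - 2 < y → y ≤ s ^ 2 + t ^ 2 + 2 →
        0 < ((y - 1) * g - s) * (y * g - t)) := by
  constructor
  · rintro ⟨z, h1, h2⟩ y _ _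
    rcases le_or_gt y z with h | h
    · -- y ≤ z : both factors negative
      have hy : y * g ≤ z * g := mul_le_mul_of_nonneg_right h hg.le
      have hy' : (y - 1) * g ≤ (z - 1) * g :=
        mul_le_mul_of_nonneg_right (by linarith) hg.le
      apply mul_pos_of_neg_of_neg <;> nlinarith
    · -- z < y : both factors positive
      have h' : z + 1 ≤ y := h
      have hy : (z + 1) * g ≤ y * g := mul_le_mul_of_nonneg_right h' hg.le
      have hy' : z * g ≤ (y - 1) * g :=
        mul_le_mul_of_nonneg_right (by linarith) hg.le
      apply mul_pos <;> nlinarith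
  · intro h
    set z : ℤ := s / g + 1 with hz
    have hz1 : s < z * g := Int.lt_ediv_add_one_mul_self s hg
    have hz0 : (z - 1) * g ≤ s := by
      have := Int.ediv_mul_le s hg.ne'
      simpa [hz] using this
    have hb1 : -s ^ 2 - t ^ 2 - 2 < z := by
      rcases le_or_gt 1 z with hzp | hzp
      · nlinarith [sq_nonneg s, sq_nonneg t]
      · have hzle : z ≤ 0 := by linarith
        have : z * g ≤ z * 1 := mul_le_mul_of_nonpos_left (by linarith) hzle
        nlinarith [sq_nonneg (2*s+1), sq_nonneg t]
    have hb2 : z ≤ s ^ 2 + t ^ 2 + 2 := by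
      rcases le_or_gt z 0 with hzp | hzp
      · nlinarith [sq_nonneg s, sq_nonneg t]
      · have h1 : (z - 1) * 1 ≤ (z - 1) * g :=
          mul_le_mul_of_nonneg_left (by linarith) (by linarith)
        nlinarith [sq_nonneg (2*s-1), sq_nonneg t]
    have hpos := h z hb1 hb2
    refine ⟨z, hz1, ?_⟩
    by_contra hc
    push_neg at hc
    nlinarith [mul_nonpos_of_nonpos_of_nonneg (by linarith : (z-1)*g - s ≤ 0) (by linarith : 0 ≤ z*g - t)]
end

section
/- (Lemma 4.) Let ε be a positive integer and let g₁,…,g_ε, s₁,…,s_ε, t₁,…,t_ε be integers satisfying 0 < g_ι and t_ι − s_ι ≤ g_ι for all ι with 1 ≤ ι ≤ ε. Define F_ι = Σ_{μ=1}^{ι} (2s_μ² + 2t_μ² + 4) for 0 ≤ ι ≤ ε, Z_ι(y) = Z(g_ι, s_ι, t_ι, y − F_{ι−1} − s_ι² − t_ι² − 2) for 1 ≤ ι ≤ ε, and W(y) = Π_{ι=1}^{ε} Z_ι(y). Then the following are equivalent: (i) for every ι with 1 ≤ ι ≤ ε there exists an integer z with s_ι < z·g_ι < t_ι; (ii) for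 every nonnegative integer f with f ≤ F_ε one has W(f) > 0. -/
private lemma l4_sign (g s t u : ℤ) (hg : 0 < g) (hts : t - s ≤ g)
    (h : ((u - 1) * g - s) * (u * g - t) ≤ 0) : (u - 1) * g ≤ s ∧ t ≤ u * g := by
  have hab : (u - 1) * g - s ≤ u * g - t := by nlinarith
  rcases mul_nonpos_iff.mp h with ⟨h1, h2⟩ | ⟨h1, h2⟩ <;> constructor <;> linarith

private lemma l4_pos (g s t : ℤ) (hg : 0 < g) (hts : t - s ≤ g) (z : ℤ)
    (hz1 : s < z * g) (hz2 : z * g < t) (u : ℤ) :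
    0 < ((u - 1) * g - s) * (u * g - t) := by
  by_contra h
  push_neg at h
  obtain ⟨h1, h2⟩ := l4_sign g s t u hg hts h
  have h3 : u - 1 < z := lt_of_mul_lt_mul_right (by linarith) hg.le
  have h4 : z < u := lt_of_mul_lt_mul_right (by linarith) hg.le
  omega

private lemma l4_bound (g s t u : ℤ) (hg : 0 < g)
    (h1 : (u - 1) * g ≤ s) (h2 : t ≤ u * g) : -t ^ 2 ≤ u ∧ u ≤ s ^ 2 + 1 := by
  constructor
  · rcases le_or_gt 0 u with h | h
    · nlinarith [sq_nonneg t]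
    · have hug : u * g ≤ u := by nlinarith
      nlinarith [sq_nonneg (t + 1)]
  · rcases le_or_gt u 1 with h | h
    · nlinarith [sq_nonneg s]
    · have : u - 1 ≤ (u - 1) * g := by nlinarith
      nlinarith [sq_nonneg (s - 1)]

private lemma l4_ceil (g s t : ℤ) (hg : 0 < g)
    (hno : ¬ ∃ z : ℤ, s < z * g ∧ z * g < t) :
    ∃ u : ℤ, (u - 1) * g ≤ s ∧ t ≤ u * g := by
  push_neg at hno
  set q := (-t) / g with hq
  have hdm := Int.mul_ediv_add_emod (-t) g
  have hr0 : 0 ≤ (-t) % g := Int.emod_nonneg _ (by omega)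
  have hrg : (-t) % g < g := Int.emod_lt_of_pos _ hg
  have h1 : q * g ≤ -t := by nlinarith [hdm]
  have h2 : -t < (q + 1) * g := by nlinarith [hdm]
  refine ⟨-q, ?_, by linarith [h1]⟩
  have hlt : (-q - 1) * g < t := by nlinarith
  by_contra hc
  push_neg at hc
  exact absurd (hno (-q - 1) hc) (not_le.mpr hlt)

private theorem l4_main (ε : ℕ) (g s t : Fin ε → ℤ)
    (hg : ∀ ι, 0 < g ι) (hts : ∀ ι, t ι - s ι ≤ g ι)
    (F : Fin ε → ℤ)
    (hF : ∀ ι, F ι = ∑ μ ∈ Finset.univ.filter (fun μ => μ < ι),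
        (2 * s μ ^ 2 + 2 * t μ ^ 2 + 4))
    (T : ℤ) (hT : T = ∑ μ : Fin ε, (2 * s μ ^ 2 + 2 * t μ ^ 2 + 4)) :
    (∀ ι : Fin ε, ∃ z : ℤ, s ι < z * g ι ∧ z * g ι < t ι) ↔
      (∀ f : ℕ, (f : ℤ) ≤ T →
        0 < ∏ ι : Fin ε,
          ((((f : ℤ) - F ι - s ι ^ 2 - t ι ^ 2 - 2) - 1) * g ι - s ι) *
          (((f : ℤ) - F ι - s ι ^ 2 - t ι ^ 2 - 2) * g ι - t ι)) := by
  have hcnn : ∀ μ : Fin ε, (0:ℤ) ≤ 2 * s μ ^ 2 + 2 * t μ ^ 2 + 4 := by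
    intro μ; positivity
  have hFnn : ∀ κ, 0 ≤ F κ := by
    intro κ; rw [hF]
    exact Finset.sum_nonneg fun μ _ => hcnn μ
  have hmono : ∀ κ ι : Fin ε, κ < ι →
      F κ + (2 * s κ ^ 2 + 2 * t κ ^ 2 + 4) ≤ F ι := by
    intro κ ι hκι
    have heq : F κ + (2 * s κ ^ 2 + 2 * t κ ^ 2 + 4) =
        ∑ μ ∈ insert κ (Finset.univ.filter (fun μ => μ < κ)),
          (2 * s μ ^ 2 + 2 * t μ ^ 2 + 4) := by
      rw [Finset.sum_insert (by simp), hF]; ring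
    rw [heq, hF ι]
    apply Finset.sum_le_sum_of_subset_of_nonneg
    · intro x hx
      simp only [Finset.mem_insert, Finset.mem_filter, Finset.mem_univ, true_and] at *
      rcases hx with rfl | hx
      · exact hκι
      · exact hx.trans hκι
    · intro μ _ _; exact hcnn μ
  have hFT : ∀ κ : Fin ε, F κ + (2 * s κ ^ 2 + 2 * t κ ^ 2 + 4) ≤ T := by
    intro κ
    rw [hT]
    have heq : F κ + (2 * s κ ^ 2 + 2 * t κ ^ 2 + 4) =
        ∑ μ ∈ insert κ (Finset.univ.filter (fun μ => μ < κ)),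
          (2 * s μ ^ 2 + 2 * t μ ^ 2 + 4) := by
      rw [Finset.sum_insert (by simp), hF]; ring
    rw [heq]
    apply Finset.sum_le_sum_of_subset_of_nonneg
    · intro x _; exact Finset.mem_univ x
    · intro μ _ _; exact hcnn μ
  constructor
  · intro hwit f _ 
    apply Finset.prod_pos
    intro κ _
    obtain ⟨z, hz1, hz2⟩ := hwit κ
    exact l4_pos (g κ) (s κ) (t κ) (hg κ) (hts κ) z hz1 hz2 _
  · intro h ι
    by_contra hno
    obtain ⟨u, hu1, hu2⟩ := l4_ceil (g ι) (s ι) (t ι) (hg ι) hno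
    obtain ⟨hb1, hb2⟩ := l4_bound (g ι) (s ι) (t ι) u (hg ι) hu1 hu2
    set fz : ℤ := u + F ι + s ι ^ 2 + t ι ^ 2 + 2 with hfz
    have hfz0 : 0 ≤ fz := by
      have := hFnn ι
      linarith [sq_nonneg (s ι)]
    have hfzT : fz ≤ T := by
      have := hFT ι
      linarith [sq_nonneg (t ι)]
    have hcast : ((fz.toNat : ℤ)) = fz := Int.toNat_of_nonneg hfz0
    have hp := h fz.toNat (by rw [hcast]; exact hfzT)
    rw [hcast] at hp
    rw [← Finset.mul_prod_erase _ _ (Finset.mem_univ ι)] at hp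
    have harg : fz - F ι - s ι ^ 2 - t ι ^ 2 - 2 = u := by rw [hfz]; ring
    have hZι : (((fz - F ι - s ι ^ 2 - t ι ^ 2 - 2) - 1) * g ι - s ι) *
        ((fz - F ι - s ι ^ 2 - t ι ^ 2 - 2) * g ι - t ι) ≤ 0 := by
      rw [harg]
      exact mul_nonpos_iff.mpr (Or.inr ⟨by linarith, by linarith⟩)
    have hrest : 0 < ∏ κ ∈ Finset.univ.erase ι,
        ((((fz - F κ - s κ ^ 2 - t κ ^ 2 - 2) - 1) * g κ - s κ) *
        ((fz - F κ - s κ ^ 2 - t κ ^ 2 - 2) * g κ - t κ)) := by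
      apply Finset.prod_pos
      intro κ hκ
      have hκι : κ ≠ ι := Finset.ne_of_mem_erase hκ
      by_contra hnp
      push_neg at hnp
      obtain ⟨hk1, hk2⟩ := l4_sign (g κ) (s κ) (t κ) _ (hg κ) (hts κ) hnp
      obtain ⟨hc1, hc2⟩ := l4_bound (g κ) (s κ) (t κ) _ (hg κ) hk1 hk2
      rcases lt_or_gt_of_ne hκι with hlt | hgt
      · have := hmono κ ι hlt
        linarith [sq_nonneg (s ι), sq_nonneg (t κ)]
      · have := hmono ι κ hgt
        linarith [sq_nonneg (s κ), sq_nonneg (t ι)]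
    have hle : _ ≤ (0:ℤ) := mul_nonpos_iff.mpr (Or.inr ⟨hZι, hrest.le⟩)
    exact absurd hp (not_lt.mpr hle)

/-- Lemma 4: under conditions (20), the conjunction of formulas (21) is
equivalent to a single bounded-universal formula with the product polynomial
`W(y) = Π_ι Z_ι(y)`, where `Z_ι(y) = Z(g_ι, s_ι, t_ι, y - F_{ι-1} - s_ι² - t_ι² - 2)`
and `F_ι = Σ_{μ=1}^{ι} (2 s_μ² + 2 t_μ² + 4)`. -/
theorem lemma4 (ε : ℕ) (hε : 0 < ε) (g s t : Fin ε → ℤ)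
    (hg : ∀ ι, 0 < g ι) (hts : ∀ ι, t ι - s ι ≤ g ι) :
    (∀ ι : Fin ε, ∃ z : ℤ, s ι < z * g ι ∧ z * g ι < t ι) ↔
      (∀ f : ℕ, (f : ℤ) ≤ ∑ μ : Fin ε, (2 * s μ ^ 2 + 2 * t μ ^ 2 + 4) →
        0 < ∏ ι : Fin ε,
          ((((f : ℤ) - (∑ μ ∈ Finset.univ.filter (fun μ => μ < ι),
                (2 * s μ ^ 2 + 2 * t μ ^ 2 + 4)) - s ι ^ 2 - t ι ^ 2 - 2) - 1) * g ι - s ι) *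
          (((f : ℤ) - (∑ μ ∈ Finset.univ.filter (fun μ => μ < ι),
                (2 * s μ ^ 2 + 2 * t μ ^ 2 + 4)) - s ι ^ 2 - t ι ^ 2 - 2) * g ι - t ι)) :=
  l4_main ε g s t hg hts _ (fun _ => rfl) _ rfl
end

section
/- (Section 6, polynomial existence.) For every positive integer ε there exist a polynomial F_ε with integer coefficients in 2ε variables and a polynomial W_ε with integer coefficients in 3ε+1 variables such that: whenever g₁,…,g_ε, s₁,…,s_ε, t₁,…,t_ε are integers satisfying 0 < g_ι and t_ι − s_ι ≤ g_ι for all ι with 1 ≤ ι ≤ ε, the statement 'for every ι with 1 ≤ ι ≤ ε there exists an integer z with s_ι < z·g_ι < t_ι' is equivalent to the statement 'for every nonnegative integer f with f ≤ F_ε(s₁,…,s_ε,t₁,…,t_ε) one has W_ε(g₁,…,g_ε,s₁,…,s_ε,t₁,…,t_ε,f) > 0'. -/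
open MvPolynomial


private lemma bad_iff (g s t z : ℤ) (hg : 0 < g) (hts : t - s ≤ g) :
    (2*z*g - (s + g + t))^2 - (s + g - t)^2 ≤ 0 ↔ t ≤ z*g ∧ z*g ≤ s + g := by
  constructor
  · intro h
    constructor
    · by_contra hc
      push_neg at hc
      nlinarith
    · by_contra hc
      push_neg at hc
      nlinarith
  · rintro ⟨h1, h2⟩
    nlinarith [mul_nonneg (sub_nonneg.2 h1) (sub_nonneg.2 h2)]

private lemma witness_iff (g s t : ℤ) (hg : 0 < g) :
    (∃ z : ℤ, s < z*g ∧ z*g < t) ↔ ∀ z : ℤ, ¬ (t ≤ z*g ∧ z*g ≤ s+g) := by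
  constructor
  · rintro ⟨z, hz1, hz2⟩ z' ⟨h1, h2⟩
    have hzz' : z < z' := by nlinarith
    have : z' < z + 1 := by nlinarith
    omega
  · intro h
    refine ⟨s / g + 1, ?_, ?_⟩
    · have h0 := Int.emod_lt_of_pos s hg
      have h1 := Int.mul_ediv_add_emod s g
      nlinarith
    · have h0 := Int.emod_nonneg s (ne_of_gt hg)
      have h1 := Int.mul_ediv_add_emod s g
      by_contra hc
      push_neg at hc
      exact h (s/g+1) ⟨hc, by nlinarith⟩

private lemma bad_bound (g s t z N : ℤ) (hg : 0 < g) (hs : |s| ≤ N - 1) (ht : |t| ≤ N - 1)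
    (h1 : t ≤ z*g) (h2 : z*g ≤ s + g) : |z| ≤ N := by
  rw [abs_le] at *
  rcases le_or_gt z 0 with hz | hz
  · have : z*g ≤ z := by nlinarith
    constructor <;> nlinarith
  · have : z - 1 ≤ (z-1)*g := by nlinarith
    constructor <;> nlinarith

private lemma core (ε : ℕ) (g s t : Fin ε → ℤ) (hg : ∀ i, 0 < g i)
    (hts : ∀ i, t i - s i ≤ g i) :
    (∀ i, ∃ z : ℤ, s i < z * g i ∧ z * g i < t i) ↔
    (∀ f : ℕ, (f:ℤ) ≤ (ε:ℤ) * (2 * ((∑ j, ((s j)^2 + (t j)^2)) + 1) + 1) - 1 →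
      0 < ∏ i, ((2*((f:ℤ) - ((∑ j, ((s j)^2+(t j)^2)) + 1)
              - (i.val:ℤ)*(2*((∑ j, ((s j)^2+(t j)^2))+1)+1))*g i
            - (s i + g i + t i))^2 - (s i + g i - t i)^2)) := by
  set N : ℤ := (∑ j, ((s j)^2 + (t j)^2)) + 1 with hNdef
  have hN1 : 1 ≤ N := by
    have : (0:ℤ) ≤ ∑ j, ((s j)^2 + (t j)^2) :=
      Finset.sum_nonneg fun j _ => by positivity
    omega
  have hsN : ∀ i, |s i| ≤ N - 1 := by
    intro i
    have h1 : (s i)^2 + (t i)^2 ≤ ∑ j, ((s j)^2 + (t j)^2) :=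
      Finset.single_le_sum (f := fun j => (s j)^2 + (t j)^2)
        (fun j _ => by positivity) (Finset.mem_univ i)
    have h2 : |s i| ≤ (s i)^2 := by nlinarith [abs_nonneg (s i), sq_abs (s i)]
    nlinarith [sq_nonneg (t i)]
  have htN : ∀ i, |t i| ≤ N - 1 := by
    intro i
    have h1 : (s i)^2 + (t i)^2 ≤ ∑ j, ((s j)^2 + (t j)^2) :=
      Finset.single_le_sum (f := fun j => (s j)^2 + (t j)^2)
        (fun j _ => by positivity) (Finset.mem_univ i)
    have h2 : |t i| ≤ (t i)^2 := by nlinarith [abs_nonneg (t i), sq_abs (t i)]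
    nlinarith [sq_nonneg (s i)]
  -- A i z > 0 iff not bad
  have hApos : ∀ (i : Fin ε) (z : ℤ),
      (0 < (2*z*g i - (s i + g i + t i))^2 - (s i + g i - t i)^2) ↔
      ¬ (t i ≤ z*g i ∧ z*g i ≤ s i + g i) := by
    intro i z
    rw [← bad_iff (g i) (s i) (t i) z (hg i) (hts i)]
    omega
  have hAbig : ∀ (i : Fin ε) (z : ℤ), N < |z| →
      0 < (2*z*g i - (s i + g i + t i))^2 - (s i + g i - t i)^2 := by
    intro i z hz
    rw [hApos]
    rintro ⟨h1, h2⟩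
    exact absurd (bad_bound (g i) (s i) (t i) z N (hg i) (hsN i) (htN i) h1 h2)
      (by omega)
  have hGood : ∀ i : Fin ε,
      (∃ z : ℤ, s i < z * g i ∧ z * g i < t i) ↔
      ∀ z : ℤ, 0 < (2*z*g i - (s i + g i + t i))^2 - (s i + g i - t i)^2 := by
    intro i
    rw [witness_iff (g i) (s i) (t i) (hg i)]
    exact forall_congr' fun z => (hApos i z).symm
  constructor
  · intro H f _
    refine Finset.prod_pos fun i _ => ?_
    exact (hGood i).1 (H i) _
  · intro H i
    rw [hGood i]
    intro z
    by_cases hz : |z| ≤ N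
    · have hiε : (i.val : ℤ) ≤ (ε:ℤ) - 1 := by
        have := i.isLt
        omega
      have hi0 : (0:ℤ) ≤ (i.val:ℤ) := by positivity
      set fz : ℤ := z + N + (i.val:ℤ)*(2*N+1) with hfzdef
      have habs := abs_le.1 hz
      have hfz0 : 0 ≤ fz := by nlinarith
      have hfle : fz ≤ (ε:ℤ) * (2*N+1) - 1 := by nlinarith
      have hcast : ((fz.toNat : ℤ)) = fz := Int.toNat_of_nonneg hfz0
      have hprod := H fz.toNat (by rw [hcast]; exact hfle)
      rw [hcast] at hprod
      have hfactor : ∀ j : Fin ε, j ≠ i →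
          0 < (2*(fz - N - (j.val:ℤ)*(2*N+1))*g j - (s j + g j + t j))^2
              - (s j + g j - t j)^2 := by
        intro j hj
        apply hAbig
        have hval : (j.val : ℤ) ≠ (i.val : ℤ) := by
          simpa [Fin.ext_iff] using fun h => hj (Fin.ext (by exact_mod_cast h))
        rcases lt_or_gt_of_ne hval with h | h
        · have h1 : (1:ℤ) ≤ (i.val:ℤ) - (j.val:ℤ) := by omega
          refine lt_abs.2 (Or.inl ?_)
          nlinarith
        · have h1 : (1:ℤ) ≤ (j.val:ℤ) - (i.val:ℤ) := by omega
          refine lt_abs.2 (Or.inr ?_)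
          nlinarith
      have hself : fz - N - (i.val:ℤ)*(2*N+1) = z := by ring
      rw [← Finset.prod_erase_mul _ _ (Finset.mem_univ i)] at hprod
      rw [hself] at hprod
      have hP : 0 < ∏ j ∈ Finset.univ.erase i,
          ((2*(fz - N - (j.val:ℤ)*(2*N+1))*g j - (s j + g j + t j))^2
            - (s j + g j - t j)^2) :=
        Finset.prod_pos fun j hj => hfactor j (Finset.ne_of_mem_erase hj)
      nlinarith
    · exact hAbig i z (by omega)

/-- Section 6: for every `ε ≥ 1` there are polynomials `F_ε` in `2ε` variables
and `W_ε` in `3ε + 1` variables such that under conditions (20) the formula (21)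
is equivalent to a bounded-universal formula. -/
theorem exists_F_W (ε : ℕ) (hε : 0 < ε) :
    ∃ (F : MvPolynomial (Fin (2 * ε)) ℤ) (W : MvPolynomial (Fin (3 * ε + 1)) ℤ),
      ∀ g s t : Fin ε → ℤ, (∀ ι, 0 < g ι) → (∀ ι, t ι - s ι ≤ g ι) →
        ((∀ ι : Fin ε, ∃ z : ℤ, s ι < z * g ι ∧ z * g ι < t ι) ↔
          (∀ f : ℕ,
            (f : ℤ) ≤ MvPolynomial.eval
                (fun i => Fin.append s t (Fin.cast (two_mul ε) i)) F →
            0 < MvPolynomial.eval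
                (fun i =>
                  (Fin.snoc (Fin.append (Fin.append g s) t) (f : ℤ) :
                      Fin (ε + ε + ε + 1) → ℤ)
                    (Fin.cast (by ring : 3 * ε + 1 = ε + ε + ε + 1) i)) W)) := by
  refine ⟨C (ε:ℤ) * (2 * ((∑ i : Fin ε,
        ((X ⟨i.val, by omega⟩ : MvPolynomial (Fin (2*ε)) ℤ)^2
          + (X ⟨ε + i.val, by omega⟩)^2)) + 1) + 1) - 1,
    ∏ i : Fin ε,
      ((2 * (X ⟨3*ε, by omega⟩
            - ((∑ j : Fin ε, ((X ⟨ε + j.val, by omega⟩ : MvPolynomial (Fin (3*ε+1)) ℤ)^2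
                + (X ⟨ε + ε + j.val, by omega⟩)^2)) + 1)
            - C (i.val : ℤ) * (2 * ((∑ j : Fin ε,
                ((X ⟨ε + j.val, by omega⟩ : MvPolynomial (Fin (3*ε+1)) ℤ)^2
                  + (X ⟨ε + ε + j.val, by omega⟩)^2)) + 1) + 1))
          * X ⟨i.val, by omega⟩
        - (X ⟨ε + i.val, by omega⟩ + X ⟨i.val, by omega⟩ + X ⟨ε + ε + i.val, by omega⟩))^2
      - (X ⟨ε + i.val, by omega⟩ + X ⟨i.val, by omega⟩ - X ⟨ε + ε + i.val, by omega⟩)^2),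
    ?_⟩
  intro g s t hg hts
  have e1 : ∀ (i : Fin ε) (h : i.val < 2 * ε),
      Fin.append s t (Fin.cast (two_mul ε) ⟨i.val, h⟩) = s i := fun i h => by
    have : Fin.cast (two_mul ε) ⟨i.val, h⟩ = Fin.castAdd ε i := rfl
    rw [this, Fin.append_left]
  have e2 : ∀ (i : Fin ε) (h : ε + i.val < 2 * ε),
      Fin.append s t (Fin.cast (two_mul ε) ⟨ε + i.val, h⟩) = t i := fun i h => by
    have : Fin.cast (two_mul ε) ⟨ε + i.val, h⟩ = Fin.natAdd ε i := rfl
    rw [this, Fin.append_right]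
  have e3 : ∀ (x : ℤ) (i : Fin ε) (h : i.val < 3 * ε + 1),
      (Fin.snoc (Fin.append (Fin.append g s) t) x : Fin (ε + ε + ε + 1) → ℤ)
        (Fin.cast (by ring : 3 * ε + 1 = ε + ε + ε + 1) ⟨i.val, h⟩) = g i := fun x i h => by
    have : Fin.cast (by ring : 3 * ε + 1 = ε + ε + ε + 1) ⟨i.val, h⟩
        = Fin.castSucc (Fin.castAdd ε (Fin.castAdd ε i)) := rfl
    rw [this, Fin.snoc_castSucc, Fin.append_left, Fin.append_left]
  have e4 : ∀ (x : ℤ) (i : Fin ε) (h : ε + i.val < 3 * ε + 1),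
      (Fin.snoc (Fin.append (Fin.append g s) t) x : Fin (ε + ε + ε + 1) → ℤ)
        (Fin.cast (by ring : 3 * ε + 1 = ε + ε + ε + 1) ⟨ε + i.val, h⟩) = s i := fun x i h => by
    have : Fin.cast (by ring : 3 * ε + 1 = ε + ε + ε + 1) ⟨ε + i.val, h⟩
        = Fin.castSucc (Fin.castAdd ε (Fin.natAdd ε i)) := rfl
    rw [this, Fin.snoc_castSucc, Fin.append_left, Fin.append_right]
  have e5 : ∀ (x : ℤ) (i : Fin ε) (h : ε + ε + i.val < 3 * ε + 1),
      (Fin.snoc (Fin.append (Fin.append g s) t) x : Fin (ε + ε + ε + 1) → ℤ)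
        (Fin.cast (by ring : 3 * ε + 1 = ε + ε + ε + 1) ⟨ε + ε + i.val, h⟩) = t i := fun x i h => by
    have : Fin.cast (by ring : 3 * ε + 1 = ε + ε + ε + 1) ⟨ε + ε + i.val, h⟩
        = Fin.castSucc (Fin.natAdd (ε + ε) i) := rfl
    rw [this, Fin.snoc_castSucc, Fin.append_right]
  have e6 : ∀ (x : ℤ) (h : 3 * ε < 3 * ε + 1),
      (Fin.snoc (Fin.append (Fin.append g s) t) x : Fin (ε + ε + ε + 1) → ℤ)
        (Fin.cast (by ring : 3 * ε + 1 = ε + ε + ε + 1) ⟨3 * ε, h⟩) = x := fun x h => by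
    have : Fin.cast (by ring : 3 * ε + 1 = ε + ε + ε + 1) ⟨3 * ε, h⟩
        = Fin.last (ε + ε + ε) := by
      ext; simp [Fin.last]; omega
    rw [this, Fin.snoc_last]
  simp only [map_sub, map_add, map_mul, map_pow, map_one, map_ofNat, eval_C, eval_X,
    map_sum, map_prod]
  simp only [e1, e2, e3, e4, e5, e6]
  exact core ε g s t hg hts
end
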